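/- arXiv:2104.10153 — 3 statements merged into one kernel-verified Lean document; each statement's English description precedes it below -/
import Mathlib

section
/- For any gauge transformation V_t = u_t(⊕_k v_k)u_t† commuting with the Hamiltonian H_t = u_t h_t u_t† (with h_t = ⊕_k ε_k(t) I_{n_k} diagonal), and any density matrix ρ_t, one has Tr[V_t ρ_t V_t† · u_t ḣ_t u_t†] = Tr[ρ_t · u_t ḣ_t u_t†]. In other words, the integrand of the invariant work W_inv is pointwise invariant under the emergent gauge. -/
/-! The gauge transformation `V = u (⊕ v_k) u†` is unitary, and it commutes with `u ḣ u†`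
because `⊕ v_k` commutes with the blockwise scalar `ḣ` and conjugation by `u` is an algebra
automorphism. Cyclicity of the trace then brings `V†` next to `V`, where they cancel. -/

open Matrix

namespace Matrix

variable {o : Type*} {m' : o → Type*} [Fintype o] [DecidableEq o]
  [∀ i, Fintype (m' i)] [∀ i, DecidableEq (m' i)]

theorem blockDiagonal'_mem_unitaryGroup {α : Type*} [CommRing α] [StarRing α]
    {v : ∀ i, Matrix (m' i) (m' i) α} (hv : ∀ i, v i ∈ unitaryGroup (m' i) α) :
    blockDiagonal' v ∈ unitaryGroup ((i : o) × m' i) α := by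
  rw [mem_unitaryGroup_iff, star_eq_conjTranspose, blockDiagonal'_conjTranspose,
    ← blockDiagonal'_mul, ← blockDiagonal'_one]
  exact congrArg blockDiagonal' (funext fun i => mem_unitaryGroup_iff.mp (hv i))

theorem commute_blockDiagonal'_smul_one {α : Type*} [CommSemiring α]
    (v : ∀ i, Matrix (m' i) (m' i) α) (c : o → α) :
    Commute (blockDiagonal' v) (blockDiagonal' fun i => c i • (1 : Matrix (m' i) (m' i) α)) :=
  Commute.map (f := blockDiagonal'RingHom m' α)
    (funext fun i => ((Commute.one_right (v i)).smul_right (c i)).eq)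

theorem trace_unitary_conj_mul_of_commute {n R : Type*} [Fintype n] [DecidableEq n] [CommRing R]
    [StarRing R] {W X : Matrix n n R} (hW : W ∈ unitaryGroup n R) (hWX : Commute W X)
    (ρ : Matrix n n R) :
    (W * ρ * Wᴴ * X).trace = (ρ * X).trace := by
  calc (W * ρ * Wᴴ * X).trace = (ρ * (Wᴴ * (X * W))).trace := by
        rw [Matrix.mul_assoc, Matrix.mul_assoc, trace_mul_comm, Matrix.mul_assoc,
          Matrix.mul_assoc]
    _ = (ρ * X).trace := by
        rw [← hWX.eq, ← Matrix.mul_assoc Wᴴ, ← star_eq_conjTranspose,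
          mem_unitaryGroup_iff'.mp hW, Matrix.one_mul]

end Matrix

theorem invariant_work_integrand_gauge_invariant_general {p : ℕ} (n : Fin p → ℕ)
    (εdot : Fin p → ℝ)
    (u : Matrix ((k : Fin p) × Fin (n k)) ((k : Fin p) × Fin (n k)) ℂ)
    (hu : u ∈ Matrix.unitaryGroup ((k : Fin p) × Fin (n k)) ℂ)
    (v : (k : Fin p) → Matrix (Fin (n k)) (Fin (n k)) ℂ)
    (hv : ∀ k, v k ∈ Matrix.unitaryGroup (Fin (n k)) ℂ)
    (V hdot : Matrix ((k : Fin p) × Fin (n k)) ((k : Fin p) × Fin (n k)) ℂ)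
    (hV : V = u * Matrix.blockDiagonal' v * uᴴ)
    (hhdot : hdot = Matrix.blockDiagonal'
      (fun k => (εdot k : ℂ) • (1 : Matrix (Fin (n k)) (Fin (n k)) ℂ)))
    (ρ : Matrix ((k : Fin p) × Fin (n k)) ((k : Fin p) × Fin (n k)) ℂ) :
    (V * ρ * Vᴴ * (u * hdot * uᴴ)).trace = (ρ * (u * hdot * uᴴ)).trace := by
  subst hV hhdot
  have hV_unitary : u * blockDiagonal' v * uᴴ ∈ unitaryGroup _ ℂ :=
    mul_mem (mul_mem hu (blockDiagonal'_mem_unitaryGroup hv)) (Unitary.star_mem hu)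
  have hV_commute := (commute_blockDiagonal'_smul_one v fun k => (εdot k : ℂ)).map
    (Unitary.conjStarAlgAut ℂ _ ⟨u, hu⟩)
  exact trace_unitary_conj_mul_of_commute hV_unitary hV_commute ρ

/-- The integrand of the invariant work is pointwise invariant under the emergent
gauge: for `V = u (⊕_k v_k) u†` with `v_k` unitary, `h = ⊕_k ε_k I_{n_k}`,
`ḣ = ⊕_k ε̇_k I_{n_k}`, and any matrix `ρ`,
`Tr[V ρ V† · u ḣ u†] = Tr[ρ · u ḣ u†]`. -/
theorem invariant_work_integrand_gauge_invariant {p : ℕ} (n : Fin p → ℕ)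
    (ε εdot : Fin p → ℝ)
    (u : Matrix ((k : Fin p) × Fin (n k)) ((k : Fin p) × Fin (n k)) ℂ)
    (hu : u ∈ Matrix.unitaryGroup ((k : Fin p) × Fin (n k)) ℂ)
    (v : (k : Fin p) → Matrix (Fin (n k)) (Fin (n k)) ℂ)
    (hv : ∀ k, v k ∈ Matrix.unitaryGroup (Fin (n k)) ℂ)
    (V h hdot : Matrix ((k : Fin p) × Fin (n k)) ((k : Fin p) × Fin (n k)) ℂ)
    (hV : V = u * Matrix.blockDiagonal' v * uᴴ)
    (hh : h = Matrix.blockDiagonal'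
      (fun k => (ε k : ℂ) • (1 : Matrix (Fin (n k)) (Fin (n k)) ℂ)))
    (hhdot : hdot = Matrix.blockDiagonal'
      (fun k => (εdot k : ℂ) • (1 : Matrix (Fin (n k)) (Fin (n k)) ℂ)))
    (ρ : Matrix ((k : Fin p) × Fin (n k)) ((k : Fin p) × Fin (n k)) ℂ) :
    (V * ρ * Vᴴ * (u * hdot * uᴴ)).trace = (ρ * (u * hdot * uᴴ)).trace :=
  invariant_work_integrand_gauge_invariant_general n εdot u hu v hv V hdot hV hhdot ρ
end

section
/- Let H_t have a nondegenerate spectral decomposition H_t = Σ_k ε_k(t)|a_k(t)⟩⟨a_k(t)| with orthonormal eigenvectors, and write ρ_t = Σ_{jl} c_{jl}(t)|a_j(t)⟩⟨a_l(t)|. Then the coherent heat integrand Tr[ρ_t(u̇_t h_t u_t† + u_t h_t u̇_t†)] equals Σ_{j≠l} c_{jl}(t)⟨ȧ_l(t)|a_j(t)⟩(ε_l(t) − ε_j(t)); in particular the diagonal coefficients c_{jj}(t) do not contribute. -/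
open Matrix ComplexOrder BigOperators

/-! Differentiating `u(s)ᴴ u(s) = 1` shows that `K = u̇ᴴ u` satisfies `u̇ = -u K` and
`u̇ᴴ = K uᴴ`, so the integrand is `Tr[C (h K - K h)]` with `C = uᴴ ρ u`. As `h` is diagonal,
`(h K - K h)_{lj} = (ε_l - ε_j) K_{lj}`, which vanishes for `l = j`. -/

namespace Matrix

variable {n : Type*} [Fintype n]

theorem hasDerivAt_conjTranspose_mul_self_apply {𝕜 : Type*} [RCLike 𝕜]
    {u : ℝ → Matrix n n 𝕜} {u' : Matrix n n 𝕜} {t : ℝ}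
    (hu' : ∀ i j, HasDerivAt (fun r => u r i j) (u' i j) t) (i j : n) :
    HasDerivAt (fun s => ((u s)ᴴ * u s) i j) ((u'ᴴ * u t + (u t)ᴴ * u') i j) t := by
  simp only [mul_apply, conjTranspose_apply, add_apply, ← Finset.sum_add_distrib]
  exact HasDerivAt.fun_sum fun k _ => (hu' k i).star.mul (hu' k j)

theorem conjTranspose_deriv_mul_add_eq_zero {𝕜 : Type*} [RCLike 𝕜] [DecidableEq n]
    {u : ℝ → Matrix n n 𝕜} {u' : Matrix n n 𝕜} {t : ℝ}
    (hu : ∀ s, u s ∈ unitaryGroup n 𝕜)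
    (hu' : ∀ i j, HasDerivAt (fun r => u r i j) (u' i j) t) :
    u'ᴴ * u t + (u t)ᴴ * u' = 0 := by
  have hconst (s : ℝ) : (u s)ᴴ * u s = 1 := mem_unitaryGroup_iff'.mp (hu s)
  ext i j
  have hderiv := hasDerivAt_conjTranspose_mul_self_apply hu' i j
  simp only [hconst] at hderiv
  exact hderiv.unique (hasDerivAt_const t _)

variable {R : Type*} [CommRing R] [DecidableEq n]

theorem diagonal_mul_sub_mul_diagonal_apply (e : n → R) (K : Matrix n n R) (i j : n) :
    (diagonal e * K - K * diagonal e) i j = (e i - e j) * K i j := by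
  simp only [sub_apply, diagonal_mul, mul_diagonal]
  ring

theorem trace_mul_deriv_conj_add [StarRing R] {U U' : Matrix n n R} (hU : U ∈ unitaryGroup n R)
    (hskew : U'ᴴ * U + Uᴴ * U' = 0) (ρ h : Matrix n n R) :
    (ρ * (U' * h * Uᴴ + U * h * U'ᴴ)).trace =
      (Uᴴ * ρ * U * (h * (U'ᴴ * U) - U'ᴴ * U * h)).trace := by
  have hUUh : U * Uᴴ = 1 := mem_unitaryGroup_iff.mp hU
  set K := U'ᴴ * U
  have hderiv : U' = -(U * K) := by
    rw [← mul_neg, neg_eq_iff_add_eq_zero.mpr hskew, ← mul_assoc, hUUh, Matrix.one_mul]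
  have hderiv_conj : U'ᴴ = K * Uᴴ := by rw [mul_assoc, hUUh, mul_one]
  calc (ρ * (U' * h * Uᴴ + U * h * U'ᴴ)).trace = (ρ * U * (h * K - K * h) * Uᴴ).trace := by
        rw [hderiv_conj, hderiv]; noncomm_ring
    _ = (Uᴴ * ρ * U * (h * K - K * h)).trace := by rw [trace_mul_comm, ← mul_assoc, ← mul_assoc]

end Matrix

/-- In the paper's notation, `c_{jl} = ((u t)ᴴ * ρ * u t) j l` and
`⟨ȧ_l|a_j⟩ = ((u' t)ᴴ * u t) l j`. -/
theorem coherent_heat_integrand_only_coherences_general {d : ℕ}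
    (u u' : ℝ → Matrix (Fin d) (Fin d) ℂ)
    (hu : ∀ s, u s ∈ Matrix.unitaryGroup (Fin d) ℂ)
    (ε : Fin d → ℝ → ℝ) (h : ℝ → Matrix (Fin d) (Fin d) ℂ)
    (hh : ∀ s, h s = Matrix.diagonal (fun k => (ε k s : ℂ)))
    (ρ : Matrix (Fin d) (Fin d) ℂ)
    (t : ℝ)
    (hu' : ∀ i j, HasDerivAt (fun r => u r i j) (u' t i j) t) :
    (ρ * (u' t * h t * (u t)ᴴ + u t * h t * (u' t)ᴴ)).trace =
      ∑ j, ∑ l, if j ≠ l then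
        ((u t)ᴴ * ρ * u t) j l * ((u' t)ᴴ * u t) l j * ((ε l t : ℂ) - (ε j t : ℂ))
      else 0 := by
  rw [trace_mul_deriv_conj_add (hu t) (conjTranspose_deriv_mul_add_eq_zero hu hu'), hh t]
  simp only [trace, diag, mul_apply, diagonal_mul_sub_mul_diagonal_apply]
  refine Fintype.sum_congr _ _ fun j => Fintype.sum_congr _ _ fun l => ?_
  split_ifs with hjl
  · ring
  · obtain rfl := not_not.mp hjl
    simp

/-- In the instantaneous energy eigenbasis (columns of the unitary `u_t`, with
simple spectrum `ε_k(t)` and `h_t = diag(ε_k(t))`), the coherent heat integrand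
`Tr[ρ(u̇ h u† + u h u̇†)]` equals `Σ_{j≠l} c_{jl} ⟨ȧ_l|a_j⟩ (ε_l − ε_j)`,
where `c_{jl} = ⟨a_j|ρ|a_l⟩ = (u† ρ u)_{jl}` and `⟨ȧ_l|a_j⟩ = (u̇† u)_{lj}`;
in particular the diagonal coefficients `c_{jj}` do not contribute. -/
theorem coherent_heat_integrand_only_coherences {d : ℕ}
    (u u' : ℝ → Matrix (Fin d) (Fin d) ℂ)
    (hu : ∀ s, u s ∈ Matrix.unitaryGroup (Fin d) ℂ)
    (ε : Fin d → ℝ → ℝ) (h : ℝ → Matrix (Fin d) (Fin d) ℂ)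
    (hh : ∀ s, h s = Matrix.diagonal (fun k => (ε k s : ℂ)))
    (ρ : Matrix (Fin d) (Fin d) ℂ) (hρ : ρ.PosSemidef) (hρ1 : ρ.trace = 1)
    (t : ℝ)
    (hsimple : Function.Injective (fun k => ε k t))
    (hu' : ∀ i j, HasDerivAt (fun r => u r i j) (u' t i j) t) :
    (ρ * (u' t * h t * (u t)ᴴ + u t * h t * (u' t)ᴴ)).trace =
      ∑ j, ∑ l, if j ≠ l then
        ((u t)ᴴ * ρ * u t) j l * ((u' t)ᴴ * u t) l j * ((ε l t : ℂ) - (ε j t : ℂ))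
      else 0 :=
  coherent_heat_integrand_only_coherences_general u u' hu ε h hh ρ t hu'
end

section
/- Under a gauge transformation ρ_t ↦ V_t ρ_t V_t† with [V_t, H_t] = 0, the usual work rate transforms as Tr[V_t ρ_t V_t† Ḣ_t] = Tr[ρ_t Ḣ_t] + Tr[[H_t, ρ_t] V_t† V̇_t]. In particular, if [H_t, ρ_t] = 0 then the usual work rate is gauge invariant. -/
/-!
Differentiating `V H = H V` gives `V̇ H + V Ḣ = Ḣ V + H V̇`. Multiplying on the left by `V†`,
which also commutes with `H`, yields `V† Ḣ V = Ḣ + V† V̇ H - H V† V̇`, and cyclicity of the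
trace turns `Tr[V ρ V† Ḣ] = Tr[ρ V† Ḣ V]` into `Tr[ρ Ḣ] + Tr[[H, ρ] V† V̇]`.
-/

open Matrix ComplexOrder

section Derivatives

variable {𝕜 𝔸 : Type*} [NontriviallyNormedField 𝕜] [NormedCommRing 𝔸] [NormedAlgebra 𝕜 𝔸]

theorem Matrix.hasDerivAt_mul_apply {m n p : Type*} [Fintype n]
    {A : 𝕜 → Matrix m n 𝔸} {B : 𝕜 → Matrix n p 𝔸} {A' : Matrix m n 𝔸} {B' : Matrix n p 𝔸}
    {t : 𝕜} (hA : ∀ i j, HasDerivAt (fun r => A r i j) (A' i j) t)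
    (hB : ∀ i j, HasDerivAt (fun r => B r i j) (B' i j) t) (i : m) (j : p) :
    HasDerivAt (fun r => (A r * B r) i j) ((A' * B t + A t * B') i j) t := by
  simpa only [mul_apply, add_apply, ← Finset.sum_add_distrib, Pi.mul_apply] using
    HasDerivAt.fun_sum fun k _ => (hA i k).mul (hB k j)

theorem Matrix.deriv_mul_add_mul_eq_of_commute {n : Type*} [Fintype n]
    {A B : 𝕜 → Matrix n n 𝔸} {A' B' : Matrix n n 𝔸} {t : 𝕜}
    (hAB : ∀ r, Commute (A r) (B r))
    (hA : ∀ i j, HasDerivAt (fun r => A r i j) (A' i j) t)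
    (hB : ∀ i j, HasDerivAt (fun r => B r i j) (B' i j) t) :
    A' * B t + A t * B' = B' * A t + B t * A' := by
  ext i j
  refine (hasDerivAt_mul_apply hA hB i j).unique ?_
  simpa only [(hAB _).eq] using hasDerivAt_mul_apply hB hA i j

end Derivatives

theorem Commute.star_left_of_mem_unitary {R : Type*} [Monoid R] [StarMul R] {U a : R}
    (hU : U ∈ unitary R) (h : Commute U a) : Commute (star U) a :=
  Commute.units_inv_left (u := Unitary.toUnits ⟨U, hU⟩) h

theorem Matrix.trace_conj_mul_eq_add_trace_commutator {n R : Type*} [Fintype n] [DecidableEq n]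
    [CommRing R] {V W H V' H' : Matrix n n R} (ρ : Matrix n n R) (hWV : W * V = 1)
    (hWH : Commute W H)     (hderiv : V' * H + V * H' = H' * V + H * V') :
    trace (V * ρ * W * H') = trace (ρ * H') + trace ((H * ρ - ρ * H) * (W * V')) := by
  have hconj : W * H' * V = H' + W * V' * H - H * (W * V') := by
    rw [mul_assoc, eq_sub_of_add_eq hderiv.symm]
    rw [mul_sub, mul_add, ← mul_assoc W V, hWV, one_mul, ← mul_assoc W H, hWH.eq]
    noncomm_ring
  have hcycle : trace (ρ * (W * V' * H)) = trace (H * ρ * (W * V')) := by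
    rw [← mul_assoc, trace_mul_comm, ← mul_assoc]
  calc trace (V * ρ * W * H') = trace (ρ * (W * H' * V)) := by
        rw [mul_assoc, mul_assoc, trace_mul_comm]
        simp only [mul_assoc]
    _ = trace (ρ * H') + trace ((H * ρ - ρ * H) * (W * V')) := by
        rw [hconj, mul_sub, mul_add, trace_sub, trace_add, hcycle, sub_mul, trace_sub,
          mul_assoc ρ H]
        abel

theorem work_rate_gauge_transformation_general {d : ℕ}
    (H H' V V' : ℝ → Matrix (Fin d) (Fin d) ℂ)
    (hV : ∀ s, V s ∈ Matrix.unitaryGroup (Fin d) ℂ)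
    (hcomm : ∀ s, V s * H s = H s * V s)
    (ρ : Matrix (Fin d) (Fin d) ℂ)
    (t : ℝ)
    (hH' : ∀ i j, HasDerivAt (fun r => H r i j) (H' t i j) t)
    (hV' : ∀ i j, HasDerivAt (fun r => V r i j) (V' t i j) t) :
    ((V t * ρ * (V t)ᴴ) * H' t).trace =
      (ρ * H' t).trace + ((H t * ρ - ρ * H t) * ((V t)ᴴ * V' t)).trace ∧
    (H t * ρ = ρ * H t → ((V t * ρ * (V t)ᴴ) * H' t).trace = (ρ * H' t).trace) := by
  have hderiv := deriv_mul_add_mul_eq_of_commute hcomm hV' hH'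
  have hwork := trace_conj_mul_eq_add_trace_commutator ρ
    (Unitary.star_mul_self_of_mem (hV t)) 
    (Commute.star_left_of_mem_unitary (hV t) (hcomm t)) hderiv
  rw [← star_eq_conjTranspose]
  refine ⟨hwork, fun hHρ => ?_⟩
  rw [hwork, hHρ, sub_self, zero_mul, trace_zero, add_zero]

/-- Under a gauge transformation `ρ ↦ V_t ρ V_t†` with `[V_t, H_t] = 0`, the usual
work rate transforms as
`Tr[V ρ V† Ḣ] = Tr[ρ Ḣ] + Tr[[H, ρ] V† V̇]`;
in particular, if `[H_t, ρ] = 0` then the usual work rate is gauge invariant. -/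
theorem work_rate_gauge_transformation {d : ℕ}
    (H H' V V' : ℝ → Matrix (Fin d) (Fin d) ℂ)
    (hHherm : ∀ s, (H s).IsHermitian)
    (hV : ∀ s, V s ∈ Matrix.unitaryGroup (Fin d) ℂ)
    (hcomm : ∀ s, V s * H s = H s * V s)
    (ρ : Matrix (Fin d) (Fin d) ℂ) (hρ : ρ.PosSemidef) (hρ1 : ρ.trace = 1)
    (t : ℝ)
    (hH' : ∀ i j, HasDerivAt (fun r => H r i j) (H' t i j) t)
    (hV' : ∀ i j, HasDerivAt (fun r => V r i j) (V' t i j) t) :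
    ((V t * ρ * (V t)ᴴ) * H' t).trace =
      (ρ * H' t).trace + ((H t * ρ - ρ * H t) * ((V t)ᴴ * V' t)).trace ∧
    (H t * ρ = ρ * H t → ((V t * ρ * (V t)ᴴ) * H' t).trace = (ρ * H' t).trace) :=
  work_rate_gauge_transformation_general H H' V V' hV hcomm ρ t hH' hV'
end
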